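/- (Hierarchy structure of quasi-linear commutators, leading term) Let Z be an admissible operator of order p and rank k, H a smooth function, and u smooth, all on the Euclidean-merging domain. Then the commutator satisfies |[Z, H ∂_α ∂_β] u| ≲ |H| |∂∂u|_{p−1,k−1} + Σ_{k₁+p₂=p, k₁+k₂=k} |𝓛Ω H|_{k₁−1} |∂∂u|_{p₂,k₂} + Σ_{p₁+p₂=p, k₁+k₂=k} |∂H|_{p₁−1,k₁} |∂∂u|_{p₂,k₂}, where 𝓛Ω denotes the collection of boosts and rotations, |v|_{q,l} is the max of |Z'v| over admissible Z' with order ≤ q and rank ≤ l, and sums with nonpositive indices are absent. -/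

import Mathlib

/-- Coordinate partial derivative ∂_α on ℝ^{1+3} (coordinate 0 is t). -/
noncomputable def pd (α : Fin 4) (u : (Fin 4 → ℝ) → ℝ) : (Fin 4 → ℝ) → ℝ :=
  fun p => fderiv ℝ u p (Pi.single α 1)

/-- Lorentz boost L_a = x^a ∂_t + t ∂_a. -/
noncomputable def Lb (a : Fin 3) (u : (Fin 4 → ℝ) → ℝ) : (Fin 4 → ℝ) → ℝ :=
  fun p => p a.succ * pd 0 u p + p 0 * pd a.succ u p

/-- Euclidean rotation Ω_{ab} = x^a ∂_b − x^b ∂_a. -/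
noncomputable def rotO (a b : Fin 3) (u : (Fin 4 → ℝ) → ℝ) : (Fin 4 → ℝ) → ℝ :=
  fun p => p a.succ * pd b.succ u p - p b.succ * pd a.succ u p

inductive Gen
  | pd (α : Fin 4)
  | boost (a : Fin 3)
  | rot (a b : Fin 3)
deriving DecidableEq

noncomputable def Gen.apply : Gen → ((Fin 4 → ℝ) → ℝ) → ((Fin 4 → ℝ) → ℝ)
  | Gen.pd α, u => _root_.pd α u
  | Gen.boost a, u => Lb a u
  | Gen.rot a b, u => rotO a b u

def Gen.rk : Gen → ℕ
  | Gen.pd _ => 0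
  | Gen.boost _ => 1
  | Gen.rot _ _ => 1

noncomputable def applyWord (w : List Gen) (u : (Fin 4 → ℝ) → ℝ) : (Fin 4 → ℝ) → ℝ :=
  w.foldr Gen.apply u

def wordRank (w : List Gen) : ℕ := (w.map Gen.rk).sum

def gens : List Gen :=
  ((List.finRange 4).map Gen.pd) ++ ((List.finRange 3).map Gen.boost) ++
    ((List.finRange 3).flatMap fun a => (List.finRange 3).map (Gen.rot a))

def wordsUpTo : ℕ → List (List Gen)
  | 0 => [[]]
  | n + 1 => [[]] ++ (wordsUpTo n).flatMap (fun w => gens.map (fun g => g :: w))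

/-- |u|_{p,k} : max of |Z u| over admissible Z with order ≤ p and rank ≤ k. -/
noncomputable def pkNorm (p k : ℕ) (u : (Fin 4 → ℝ) → ℝ) (x : Fin 4 → ℝ) : ℝ :=
  (((wordsUpTo p).filter (fun w => wordRank w ≤ k)).map
    (fun w => |applyWord w u x|)).foldr max 0

/-- |∂u|_{p,k}. -/
noncomputable def gradNorm (p k : ℕ) (u : (Fin 4 → ℝ) → ℝ) (x : Fin 4 → ℝ) : ℝ :=
  (((List.finRange 4).map (fun β => pkNorm p k (pd β u) x))).foldr max 0

/-- |∂∂u|_{p,k}. -/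
noncomputable def hessNorm (p k : ℕ) (u : (Fin 4 → ℝ) → ℝ) (x : Fin 4 → ℝ) : ℝ :=
  ((List.finRange 4).flatMap (fun α =>
    (List.finRange 4).map (fun β => pkNorm p k (pd α (pd β u)) x))).foldr max 0

/-- |𝓛Ω H|_q : max over boosts/rotations g and admissible Z of order ≤ q of |Z (g H)|. -/
noncomputable def loNorm (q : ℕ) (H : (Fin 4 → ℝ) → ℝ) (x : Fin 4 → ℝ) : ℝ :=
  (((List.finRange 3).map (fun a => pkNorm q q (Lb a H) x)) ++
    ((List.finRange 3).flatMap (fun a =>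
      (List.finRange 3).map (fun b => pkNorm q q (rotO a b H) x)))).foldr max 0

def Sm (u : (Fin 4 → ℝ) → ℝ) : Prop := ContDiff ℝ (((⊤:ℕ∞) : WithTop ℕ∞)) u

lemma contDiff_coord (i : Fin 4) : Sm (fun p : Fin 4 → ℝ => p i) :=
  (ContinuousLinearMap.proj i : (Fin 4 → ℝ) →L[ℝ] ℝ).contDiff

lemma Sm.pd {u} (hu : Sm u) (α : Fin 4) : Sm (pd α u) :=
  ContDiff.clm_apply (ContDiff.fderiv_right hu (by simp)) contDiff_const

lemma Sm.Lb {u} (hu : Sm u) (a : Fin 3) : Sm (Lb a u) :=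
  ContDiff.add (ContDiff.mul (contDiff_coord a.succ) (hu.pd 0))
    (ContDiff.mul (contDiff_coord 0) (hu.pd a.succ))

lemma Sm.rotO {u} (hu : Sm u) (a b : Fin 3) : Sm (rotO a b u) :=
  ContDiff.sub (ContDiff.mul (contDiff_coord a.succ) (hu.pd b.succ))
    (ContDiff.mul (contDiff_coord b.succ) (hu.pd a.succ))

lemma Sm.diffAt {u} (hu : Sm u) (x : Fin 4 → ℝ) : DifferentiableAt ℝ u x :=
  (ContDiff.differentiable hu (by simp)).differentiableAt

lemma pd_add {f g : (Fin 4 → ℝ) → ℝ} {x} (hf : DifferentiableAt ℝ f x)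
    (hg : DifferentiableAt ℝ g x) (α : Fin 4) :
    pd α (fun y => f y + g y) x = pd α f x + pd α g x := by
  simp [pd, fderiv_fun_add hf hg]

lemma pd_const_mul {f : (Fin 4 → ℝ) → ℝ} {x} (hf : DifferentiableAt ℝ f x) (c : ℝ) (α : Fin 4) :
    pd α (fun y => c * f y) x = c * pd α f x := by
  simp [pd, fderiv_const_mul hf]

lemma pd_mul {f g : (Fin 4 → ℝ) → ℝ} {x} (hf : DifferentiableAt ℝ f x)
    (hg : DifferentiableAt ℝ g x) (α : Fin 4) :
    pd α (fun y => f y * g y) x = pd α f x * g x + f x * pd α g x := by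
  simp [pd, fderiv_fun_mul hf hg]; ring

lemma pd_coord (i : Fin 4) (α : Fin 4) (x : Fin 4 → ℝ) :
    pd α (fun p => p i) x = if i = α then 1 else 0 := by
  have : (fun p : Fin 4 → ℝ => p i) = (ContinuousLinearMap.proj i : (Fin 4 → ℝ) →L[ℝ] ℝ) := rfl
  rw [pd, this, ContinuousLinearMap.fderiv]
  simp [Pi.single_apply]

lemma pd_comm {u} (hu : Sm u) (α β : Fin 4) (x) :
    pd α (pd β u) x = pd β (pd α u) x := by
  have hs : IsSymmSndFDerivAt ℝ u x :=
    ContDiffAt.isSymmSndFDerivAt (ContDiff.contDiffAt hu) (by rw [minSmoothness_of_isRCLikeNormedField]; exact WithTop.coe_le_coe.2 (le_top : (2:ℕ∞) ≤ ⊤))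
  have hd : DifferentiableAt ℝ (fderiv ℝ u) x :=
    ((ContDiff.fderiv_right hu (m := (⊤:ℕ∞)) (by simp)).differentiable (by norm_cast)).differentiableAt
  have key : ∀ γ δ : Fin 4, pd γ (pd δ u) x
      = fderiv ℝ (fderiv ℝ u) x (Pi.single γ 1) (Pi.single δ 1) := by
    intro γ δ
    have h2 : _root_.pd δ u = fun y => (fderiv ℝ u y) ((fun _ : Fin 4 → ℝ => (Pi.single δ 1 : Fin 4 → ℝ)) y) := rfl
    rw [pd, h2, fderiv_clm_apply hd (differentiableAt_const _)]
    simp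
  rw [key α β, key β α, hs]

lemma Sm.mulF {f g} (hf : Sm f) (hg : Sm g) : Sm (fun y => f y * g y) := ContDiff.mul hf hg

lemma Sm.gen {v} (hv : Sm v) (g : Gen) : Sm (Gen.apply g v) := by
  cases g with
  | pd α => exact hv.pd α
  | boost a => exact hv.Lb a
  | rot a b => exact hv.rotO a b

lemma pd_const (c : ℝ) (α : Fin 4) (x) : pd α (fun _ : Fin 4 → ℝ => c) x = 0 := by
  simp [pd]

lemma pd_sub {f g : (Fin 4 → ℝ) → ℝ} {x} (hf : DifferentiableAt ℝ f x)
    (hg : DifferentiableAt ℝ g x) (α : Fin 4) :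
    pd α (fun y => f y - g y) x = pd α f x - pd α g x := by
  simp [pd, fderiv_fun_sub hf hg]

lemma genApply_add (g : Gen) {f h : (Fin 4 → ℝ) → ℝ} {x} (hf : Sm f) (hh : Sm h) :
    Gen.apply g (fun y => f y + h y) x = Gen.apply g f x + Gen.apply g h x := by
  cases g with
  | pd α => exact pd_add (hf.diffAt x) (hh.diffAt x) α
  | boost a =>
      simp only [Gen.apply, Lb, pd_add (hf.diffAt _) (hh.diffAt _)]
      ring
  | rot a b =>
      simp only [Gen.apply, rotO, pd_add (hf.diffAt _) (hh.diffAt _)]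
      ring

lemma genApply_const_mul (g : Gen) {f : (Fin 4 → ℝ) → ℝ} {x} (hf : Sm f) (c : ℝ) :
    Gen.apply g (fun y => c * f y) x = c * Gen.apply g f x := by
  cases g with
  | pd α => exact pd_const_mul (hf.diffAt x) c α
  | boost a =>
      simp only [Gen.apply, Lb, pd_const_mul (hf.diffAt _)]
      ring
  | rot a b =>
      simp only [Gen.apply, rotO, pd_const_mul (hf.diffAt _)]
      ring

lemma genApply_zero (g : Gen) (x) : Gen.apply g (fun _ => (0:ℝ)) x = 0 := by
  cases g with
  | pd α => exact pd_const 0 α x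
  | boost a => simp [Gen.apply, Lb, pd_const]
  | rot a b => simp [Gen.apply, rotO, pd_const]

lemma genApply_mul (g : Gen) {f h : (Fin 4 → ℝ) → ℝ} {x} (hf : Sm f) (hh : Sm h) :
    Gen.apply g (fun y => f y * h y) x = Gen.apply g f x * h x + f x * Gen.apply g h x := by
  cases g with
  | pd α => exact pd_mul (hf.diffAt x) (hh.diffAt x) α
  | boost a =>
      simp only [Gen.apply, Lb, pd_mul (hf.diffAt _) (hh.diffAt _)]
      ring
  | rot a b =>
      simp only [Gen.apply, rotO, pd_mul (hf.diffAt _) (hh.diffAt _)]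
      ring

lemma Sm.listSum {ι} (T : List ι) (f : ι → (Fin 4 → ℝ) → ℝ) (hf : ∀ t ∈ T, Sm (f t)) :
    Sm (fun y => (T.map (fun t => f t y)).sum) := by
  induction T with
  | nil => simpa [Sm] using contDiff_const
  | cons a T ih =>
      have h1 : Sm (f a) := hf a (by simp)
      have h2 : Sm (fun y => (T.map (fun t => f t y)).sum) := ih (fun t ht => hf t (by simp [ht]))
      simpa [Sm] using ContDiff.add h1 h2

lemma genApply_list_sum (g : Gen) {ι} (T : List ι) (f : ι → (Fin 4 → ℝ) → ℝ)
    (hf : ∀ t ∈ T, Sm (f t)) (x) :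
    Gen.apply g (fun y => (T.map (fun t => f t y)).sum) x
      = (T.map (fun t => Gen.apply g (f t) x)).sum := by
  induction T with
  | nil => simpa using genApply_zero g x
  | cons a T ih =>
      have h1 : Sm (f a) := hf a (by simp)
      have h2 : Sm (fun y => (T.map (fun t => f t y)).sum) := Sm.listSum T f
        (fun t ht => hf t (by simp [ht]))
      have e : (fun y => ((a :: T).map (fun t => f t y)).sum)
          = fun y => f a y + (T.map (fun t => f t y)).sum := by
        funext y; simp
      rw [e, genApply_add g h1 h2, ih (fun t ht => hf t (by simp [ht]))]
      simp

/-- commutator coefficients: g (pd α v) = pd α (g v) + Σ c · pd δ v -/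
def commC : Gen → Fin 4 → List (ℝ × Fin 4)
  | Gen.pd _, _ => []
  | Gen.boost a, α =>
      (if a.succ = α then [((-1:ℝ), (0 : Fin 4))] else []) ++
        (if (0:Fin 4) = α then [((-1:ℝ), (a.succ : Fin 4))] else [])
  | Gen.rot a b, α =>
      (if a.succ = α then [((-1:ℝ), (b.succ : Fin 4))] else []) ++
        (if b.succ = α then [((1:ℝ), (a.succ : Fin 4))] else [])

lemma commC_coeff (g : Gen) (α : Fin 4) : ∀ t ∈ commC g α, |t.1| ≤ 1 := by
  intro t ht
  cases g with
  | pd γ => simp [commC] at ht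
  | boost a =>
      simp only [commC, List.mem_append] at ht
      rcases ht with h | h <;> split_ifs at h <;> simp_all
  | rot a b =>
      simp only [commC, List.mem_append] at ht
      rcases ht with h | h <;> split_ifs at h <;> simp_all

lemma commC_rk (g : Gen) (α : Fin 4) (h : commC g α ≠ []) : Gen.rk g = 1 := by
  cases g with
  | pd γ => simp [commC] at h
  | boost a => rfl
  | rot a b => rfl

lemma commC_len (g : Gen) (α : Fin 4) : (commC g α).length ≤ 2 := by
  cases g with
  | pd γ => simp [commC]
  | boost a => simp only [commC, List.length_append]; split_ifs <;> simp
  | rot a b => simp only [commC, List.length_append]; split_ifs <;> simp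

lemma genApply_pd (g : Gen) {v} (hv : Sm v) (α : Fin 4) (x) :
    Gen.apply g (pd α v) x
      = pd α (Gen.apply g v) x + ((commC g α).map (fun cd => cd.1 * pd cd.2 v x)).sum := by
  cases g with
  | pd γ => simp [Gen.apply, commC, pd_comm hv]
  | boost a =>
      have d0 : Sm (pd 0 v) := hv.pd 0
      have da : Sm (pd a.succ v) := hv.pd a.succ
      have h1 : Sm (fun p : Fin 4 → ℝ => p a.succ * pd 0 v p) :=
        (contDiff_coord a.succ).mulF d0
      have h2 : Sm (fun p : Fin 4 → ℝ => p 0 * pd a.succ v p) :=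
        (contDiff_coord 0).mulF da
      have eL : Lb a v = fun p => p a.succ * pd 0 v p + p 0 * pd a.succ v p := rfl
      simp only [Gen.apply, Lb]
      rw [eL, pd_add (h1.diffAt x) (h2.diffAt x),
        pd_mul ((contDiff_coord a.succ).diffAt x) (d0.diffAt x),
        pd_mul ((contDiff_coord 0).diffAt x) (da.diffAt x),
        pd_coord, pd_coord, pd_comm hv α 0, pd_comm hv α a.succ]
      simp only [commC]
      split_ifs <;> simp_all <;> ring
  | rot a b =>
      have db : Sm (pd b.succ v) := hv.pd b.succ
      have da : Sm (pd a.succ v) := hv.pd a.succ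
      have h1 : Sm (fun p : Fin 4 → ℝ => p a.succ * pd b.succ v p) :=
        (contDiff_coord a.succ).mulF db
      have h2 : Sm (fun p : Fin 4 → ℝ => p b.succ * pd a.succ v p) :=
        (contDiff_coord b.succ).mulF da
      have eR : rotO a b v = fun p => p a.succ * pd b.succ v p - p b.succ * pd a.succ v p := rfl
      simp only [Gen.apply, rotO]
      rw [eR, pd_sub (h1.diffAt x) (h2.diffAt x),
        pd_mul ((contDiff_coord a.succ).diffAt x) (db.diffAt x),
        pd_mul ((contDiff_coord b.succ).diffAt x) (da.diffAt x),
        pd_coord, pd_coord, pd_comm hv α b.succ, pd_comm hv α a.succ]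
      simp only [commC]
      split_ifs <;> simp_all <;> ring

lemma Sm.word {u} (hu : Sm u) (w : List Gen) : Sm (applyWord w u) := by
  induction w with
  | nil => exact hu
  | cons g w ih => exact ih.gen g

lemma applyWord_cons (g : Gen) (w : List Gen) (u) :
    applyWord (g :: w) u = Gen.apply g (applyWord w u) := rfl

lemma applyWord_append (w₁ w₂ : List Gen) (u) :
    applyWord (w₁ ++ w₂) u = applyWord w₁ (applyWord w₂ u) := by
  simp [applyWord, List.foldr_append]

lemma wordRank_cons (g : Gen) (w : List Gen) :
    wordRank (g :: w) = Gen.rk g + wordRank w := by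
  simp [wordRank]

lemma list_mul_sum {ι} (c : ℝ) (L : List ι) (f : ι → ℝ) :
    (L.map (fun t => c * f t)).sum = c * (L.map f).sum := by
  induction L with
  | nil => simp
  | cons a L ih => simp [ih, mul_add]

lemma sum_flatMap_list {ι κ} (L : List ι) (f : ι → List κ) (h : κ → ℝ) :
    ((L.flatMap f).map h).sum = (L.map (fun a => ((f a).map h).sum)).sum := by
  induction L with
  | nil => simp
  | cons a L ih => simp [ih]

lemma list_sum_le_length_mul {ι} (L : List ι) (f : ι → ℕ) (B : ℕ) (h : ∀ a ∈ L, f a ≤ B) :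
    (L.map f).sum ≤ L.length * B := by
  induction L with
  | nil => simp
  | cons a L ih =>
      have h1 := h a (by simp)
      have h2 := ih (fun b hb => h b (by simp [hb]))
      simp only [List.map_cons, List.sum_cons, List.length_cons, Nat.succ_mul]
      omega

def commC2 (g : Gen) (α β : Fin 4) : List (ℝ × Fin 4 × Fin 4) :=
  ((commC g α).map (fun cd => (cd.1, cd.2, β))) ++ ((commC g β).map (fun cd => (cd.1, α, cd.2)))

lemma commC2_coeff (g : Gen) (α β : Fin 4) : ∀ t ∈ commC2 g α β, |t.1| ≤ 1 := by
  intro t ht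
  rcases List.mem_append.1 ht with h | h <;> rcases List.mem_map.1 h with ⟨cd, hcd, rfl⟩ <;>
    exact commC_coeff g _ cd hcd

lemma commC2_rk (g : Gen) (α β : Fin 4) (t : ℝ × Fin 4 × Fin 4) (ht : t ∈ commC2 g α β) :
    Gen.rk g = 1 := by
  rcases List.mem_append.1 ht with h | h <;> rcases List.mem_map.1 h with ⟨cd, hcd, rfl⟩ <;>
    exact commC_rk g _ (List.ne_nil_of_mem hcd)

lemma commC2_len (g : Gen) (α β : Fin 4) : (commC2 g α β).length ≤ 4 := by
  have h1 := commC_len g α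
  have h2 := commC_len g β
  simp only [commC2, List.length_append, List.length_map]
  omega

lemma genApply_pd_pd (g : Gen) {v} (hv : Sm v) (α β : Fin 4) (x) :
    Gen.apply g (pd α (pd β v)) x
      = pd α (pd β (Gen.apply g v)) x
        + ((commC2 g α β).map (fun t => t.1 * pd t.2.1 (pd t.2.2 v) x)).sum := by
  have h1 := genApply_pd g (hv.pd β) α x
  have h2 : Gen.apply g (pd β v)
      = fun y => pd β (Gen.apply g v) y + ((commC g β).map (fun cd => cd.1 * pd cd.2 v y)).sum := by
    funext y; exact genApply_pd g hv β y
  have hsm1 : Sm (pd β (Gen.apply g v)) := (hv.gen g).pd β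
  have hsm2 : Sm (fun y => ((commC g β).map (fun cd => cd.1 * pd cd.2 v y)).sum) := by
    apply Sm.listSum
    intro cd _
    exact ContDiff.mul contDiff_const (hv.pd cd.2)
  have h3 : pd α (Gen.apply g (pd β v)) x
      = pd α (pd β (Gen.apply g v)) x
        + ((commC g β).map (fun cd => cd.1 * pd α (pd cd.2 v) x)).sum := by
    rw [h2, pd_add (hsm1.diffAt x) (hsm2.diffAt x)]
    congr 1
    have h4 := genApply_list_sum (Gen.pd α) (commC g β) (fun cd => fun y => cd.1 * pd cd.2 v y)
      (fun cd _ => ContDiff.mul contDiff_const (hv.pd cd.2)) x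
    have h5 : ∀ cd : ℝ × Fin 4, Gen.apply (Gen.pd α) (fun y => cd.1 * pd cd.2 v y) x
        = cd.1 * pd α (pd cd.2 v) x := by
      intro cd
      exact pd_const_mul ((hv.pd cd.2).diffAt x) cd.1 α
    rw [show pd α (fun y => ((commC g β).map (fun cd => cd.1 * pd cd.2 v y)).sum) x
        = Gen.apply (Gen.pd α) (fun y => ((commC g β).map (fun cd => cd.1 * pd cd.2 v y)).sum) x
        from rfl, h4]
    exact congrArg List.sum (List.map_congr_left (fun cd _ => h5 cd))
  rw [h1, h3, commC2]
  simp only [List.map_append, List.sum_append, List.map_map, Function.comp_def]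
  ring

noncomputable def tval (u : (Fin 4 → ℝ) → ℝ) (x : Fin 4 → ℝ) (t : ℝ × List Gen × Fin 4 × Fin 4) : ℝ :=
  t.1 * applyWord t.2.1 (pd t.2.2.1 (pd t.2.2.2 u)) x

lemma Sm.tvalF {u} (hu : Sm u) (t : ℝ × List Gen × Fin 4 × Fin 4) :
    Sm (fun y => tval u y t) := by
  exact ContDiff.mul contDiff_const (((hu.pd t.2.2.2).pd t.2.2.1).word t.2.1)

lemma commLemma (w : List Gen) {u} (hu : Sm u) : ∀ α β : Fin 4,
    ∃ T : List (ℝ × List Gen × Fin 4 × Fin 4),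
      (∀ x, pd α (pd β (applyWord w u)) x
          = applyWord w (pd α (pd β u)) x + (T.map (tval u x)).sum) ∧
      (∀ t ∈ T, |t.1| ≤ 1 ∧ t.2.1.length + 1 ≤ w.length ∧ wordRank t.2.1 + 1 ≤ wordRank w) ∧
      T.length + 1 ≤ 5 ^ w.length := by
  induction w with
  | nil =>
      intro α β
      exact ⟨[], fun x => by simp [applyWord], by simp, by simp⟩
  | cons g w ih =>
      intro α β
      choose F hF1 hF2 hF3 using ih
      have hv : Sm (applyWord w u) := hu.word w
      set v := applyWord w u with hvdef
      refine ⟨(F α β).map (fun t => (t.1, g :: t.2.1, t.2.2))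
          ++ (commC2 g α β).flatMap (fun cd =>
              ((-cd.1, w, cd.2.1, cd.2.2)
                :: ((F cd.2.1 cd.2.2).map (fun t => (-cd.1 * t.1, t.2))))), ?_, ?_, ?_⟩
      · intro x
        have hgpp := genApply_pd_pd g hv α β x
        have e2 : pd α (pd β v)
            = fun y => applyWord w (pd α (pd β u)) y + ((F α β).map (tval u y)).sum := by
          funext y; exact hF1 α β y
        have e3 : Gen.apply g (pd α (pd β v)) x
            = applyWord (g :: w) (pd α (pd β u)) x
              + ((F α β).map (fun t => t.1 * applyWord (g :: t.2.1)
                  (pd t.2.2.1 (pd t.2.2.2 u)) x)).sum := by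
          rw [e2, genApply_add g ((hu.pd β).pd α |>.word w) (Sm.listSum _ _ (fun t _ => hu.tvalF t))]
          congr 1
          rw [show Gen.apply g (fun y => ((F α β).map (tval u y)).sum) x
              = Gen.apply g (fun y => ((F α β).map (fun t => tval u y t)).sum) x from rfl,
            genApply_list_sum g (F α β) (fun t => fun y => tval u y t) (fun t _ => hu.tvalF t) x]
          refine congrArg List.sum (List.map_congr_left (fun t _ => ?_))
          have : Gen.apply g (fun y => tval u y t) x
              = t.1 * Gen.apply g (applyWord t.2.1 (pd t.2.2.1 (pd t.2.2.2 u))) x :=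
            genApply_const_mul g (((hu.pd t.2.2.2).pd t.2.2.1).word t.2.1) t.1
          rw [this]; rfl
        have e4 : ∀ cd : ℝ × Fin 4 × Fin 4, pd cd.2.1 (pd cd.2.2 v) x
            = applyWord w (pd cd.2.1 (pd cd.2.2 u)) x + ((F cd.2.1 cd.2.2).map (tval u x)).sum :=
          fun cd => hF1 cd.2.1 cd.2.2 x
        have lhs_eq : pd α (pd β (applyWord (g :: w) u)) x
            = Gen.apply g (pd α (pd β v)) x
              - ((commC2 g α β).map (fun t => t.1 * pd t.2.1 (pd t.2.2 v) x)).sum := by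
          have : applyWord (g :: w) u = Gen.apply g v := rfl
          rw [this]; linarith [hgpp]
        rw [lhs_eq, e3]
        simp only [List.map_append, List.sum_append]
        rw [sum_flatMap_list]
        have ecd : ((commC2 g α β).map (fun cd =>
            ((((-cd.1, w, cd.2.1, cd.2.2)
              :: ((F cd.2.1 cd.2.2).map (fun t => (-cd.1 * t.1, t.2)))).map (tval u x)).sum))).sum
            = ((commC2 g α β).map (fun cd => -(cd.1 * pd cd.2.1 (pd cd.2.2 v) x))).sum := by
          refine congrArg List.sum (List.map_congr_left (fun cd _ => ?_))
          rw [List.map_cons, List.sum_cons, List.map_map]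
          have : ((F cd.2.1 cd.2.2).map ((tval u x) ∘ (fun t => (-cd.1 * t.1, t.2)))).sum
              = -cd.1 * ((F cd.2.1 cd.2.2).map (tval u x)).sum := by
            rw [show (tval u x) ∘ (fun t : ℝ × List Gen × Fin 4 × Fin 4 => (-cd.1 * t.1, t.2))
                = fun t => -cd.1 * tval u x t from funext fun t => by simp [tval]; ring]
            exact list_mul_sum _ _ _
          rw [this, e4 cd]
          simp [tval]
          ring
        rw [ecd]
        have : ((commC2 g α β).map (fun cd => -(cd.1 * pd cd.2.1 (pd cd.2.2 v) x))).sum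
            = -((commC2 g α β).map (fun cd => cd.1 * pd cd.2.1 (pd cd.2.2 v) x)).sum := by
          rw [show (fun cd : ℝ × Fin 4 × Fin 4 => -(cd.1 * pd cd.2.1 (pd cd.2.2 v) x))
              = fun cd => (-1 : ℝ) * (cd.1 * pd cd.2.1 (pd cd.2.2 v) x) from funext fun cd => by ring,
            list_mul_sum]
          ring
        rw [this]
        have emap : ((F α β).map (tval u x ∘ fun t => (t.1, g :: t.2.1, t.2.2))).sum
            = ((F α β).map (fun t => t.1 * applyWord (g :: t.2.1)
                (pd t.2.2.1 (pd t.2.2.2 u)) x)).sum := by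
          refine congrArg List.sum (List.map_congr_left (fun t _ => ?_))
          simp [tval]
        rw [List.map_map, emap]
        ring
      · intro t ht
        rcases List.mem_append.1 ht with h | h
        · rcases List.mem_map.1 h with ⟨s, hs, rfl⟩
          obtain ⟨hc, hl, hr⟩ := hF2 α β s hs
          refine ⟨hc, ?_, ?_⟩
          · simpa using Nat.add_le_add_right hl 1
          · rw [wordRank_cons, wordRank_cons]
            omega
        · rcases List.mem_flatMap.1 h with ⟨cd, hcd, hmem⟩
          have hrk : Gen.rk g = 1 := commC2_rk g α β cd hcd
          have hcoef : |cd.1| ≤ 1 := commC2_coeff g α β cd hcd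
          rcases List.mem_cons.1 hmem with rfl | hmem'
          · refine ⟨by simpa using hcoef, by simp, ?_⟩
            show wordRank w + 1 ≤ wordRank (g :: w)
            rw [wordRank_cons, hrk]; omega
          · rcases List.mem_map.1 hmem' with ⟨s, hs, rfl⟩
            obtain ⟨hc, hl, hr⟩ := hF2 cd.2.1 cd.2.2 s hs
            refine ⟨?_, ?_, ?_⟩
            · show |(-cd.1 * s.1)| ≤ 1
              rw [abs_mul, abs_neg]
              exact mul_le_one₀ hcoef (abs_nonneg _) hc
            · show s.2.1.length + 1 ≤ (g :: w).length
              simp only [List.length_cons]; omega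
            · show wordRank s.2.1 + 1 ≤ wordRank (g :: w)
              rw [wordRank_cons]; omega
      · simp only [List.length_append, List.length_map, List.length_flatMap,
          Function.comp_def, List.length_cons, List.map_map]
        have hb : ∀ cd ∈ commC2 g α β, (F cd.2.1 cd.2.2).length + 1 ≤ 5 ^ w.length :=
          fun cd _ => hF3 cd.2.1 cd.2.2
        have hsum := list_sum_le_length_mul (commC2 g α β)
          (fun cd => (F cd.2.1 cd.2.2).length + 1) (5 ^ w.length) hb
        have hsum' := hsum.trans (Nat.mul_le_mul_right _ (commC2_len g α β))
        have hF := hF3 α β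
        rw [pow_succ]
        omega

lemma list_sum_add {ι} (L : List ι) (f g : ι → ℝ) :
    (L.map (fun p => f p + g p)).sum = (L.map f).sum + (L.map g).sum := by
  induction L with
  | nil => simp
  | cons a L ih => simp [ih]; ring

def gsplits : List Gen → List (List Gen × List Gen)
  | [] => []
  | a :: w => ((gsplits w ++ [(([] : List Gen), w)]).map fun p => (a :: p.1, p.2))
      ++ (gsplits w).map fun p => (p.1, a :: p.2)

lemma gsplits_spec (w : List Gen) : ∀ p ∈ gsplits w,
    p.1 ≠ [] ∧ p.1.length + p.2.length = w.length ∧ wordRank p.1 + wordRank p.2 = wordRank w := by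
  induction w with
  | nil => simp [gsplits]
  | cons a w ih =>
      intro p hp
      rcases List.mem_append.1 hp with h | h
      · rcases List.mem_map.1 h with ⟨q, hq, rfl⟩
        rcases List.mem_append.1 hq with h' | h'
        · obtain ⟨h1, h2, h3⟩ := ih q h'
          refine ⟨by simp, ?_, ?_⟩
          · simp only [List.length_cons]; omega
          · simp only [wordRank_cons]; omega
        · simp only [List.mem_singleton] at h'
          subst h'
          exact ⟨by simp, by simp [Nat.add_comm], by simp [wordRank_cons, wordRank, Nat.add_comm]⟩
      · rcases List.mem_map.1 h with ⟨q, hq, rfl⟩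
        obtain ⟨h1, h2, h3⟩ := ih q hq
        refine ⟨h1, ?_, ?_⟩
        · simp only [List.length_cons]; omega
        · simp only [wordRank_cons]; omega

lemma gsplits_len (w : List Gen) : (gsplits w).length + 1 ≤ 2 ^ w.length := by
  induction w with
  | nil => simp [gsplits]
  | cons a w ih =>
      simp only [gsplits, List.length_append, List.length_map, List.length_cons, List.length_singleton, List.length_nil, pow_succ]
      omega

lemma splitLemma (w : List Gen) {F G} (hF : Sm F) (hG : Sm G) (x) :
    applyWord w (fun y => F y * G y) x
      = F x * applyWord w G x
        + ((gsplits w).map (fun p => applyWord p.1 F x * applyWord p.2 G x)).sum := by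
  induction w generalizing x with
  | nil => simp [applyWord, gsplits]
  | cons a w ih =>
      have hfun : applyWord w (fun y => F y * G y)
          = fun y => F y * applyWord w G y
            + ((gsplits w).map (fun p => applyWord p.1 F y * applyWord p.2 G y)).sum := by
        funext y; exact ih y
      have hsm1 : Sm (fun y => F y * applyWord w G y) := hF.mulF (hG.word w)
      have hsm2 : Sm (fun y => ((gsplits w).map
          (fun p => applyWord p.1 F y * applyWord p.2 G y)).sum) :=
        Sm.listSum _ _ (fun p _ => (hF.word p.1).mulF (hG.word p.2))
      rw [applyWord_cons, hfun, genApply_add a hsm1 hsm2, genApply_mul a hF (hG.word w),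
        genApply_list_sum a (gsplits w) (fun p => fun y => applyWord p.1 F y * applyWord p.2 G y)
          (fun p _ => (hF.word p.1).mulF (hG.word p.2)) x]
      have e1 : ∀ p : List Gen × List Gen,
          Gen.apply a (fun y => applyWord p.1 F y * applyWord p.2 G y) x
            = applyWord (a :: p.1) F x * applyWord p.2 G x
              + applyWord p.1 F x * applyWord (a :: p.2) G x :=
        fun p => genApply_mul a (hF.word p.1) (hG.word p.2)
      rw [List.map_congr_left (fun p (_ : p ∈ gsplits w) => e1 p), list_sum_add]
      simp only [gsplits, List.map_append, List.sum_append, List.map_map, Function.comp_def,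
        List.map_cons, List.map_nil, List.sum_cons, List.sum_nil]
      show Gen.apply a F x * applyWord w G x + F x * Gen.apply a (applyWord w G) x + _ = _
      simp only [applyWord_cons]
      have : applyWord ([] : List Gen) F = F := rfl
      rw [this]
      ring

lemma gen_cases (g : Gen) : (∃ γ, g = Gen.pd γ) ∨ Gen.rk g = 1 := by
  cases g with
  | pd γ => exact Or.inl ⟨γ, rfl⟩
  | boost a => exact Or.inr rfl
  | rot a b => exact Or.inr rfl

lemma gen_rk_le_one (g : Gen) : Gen.rk g ≤ 1 := by
  cases g <;> simp [Gen.rk]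

lemma wordRank_le_length (w : List Gen) : wordRank w ≤ w.length := by
  induction w with
  | nil => simp [wordRank]
  | cons g t ih =>
      rw [wordRank_cons, List.length_cons]
      have := gen_rk_le_one g
      omega

lemma wordRank_append (w₁ w₂ : List Gen) : wordRank (w₁ ++ w₂) = wordRank w₁ + wordRank w₂ := by
  simp [wordRank]

lemma exists_pd_of_rank_lt (w : List Gen) (h : wordRank w < w.length) : ∃ γ, Gen.pd γ ∈ w := by
  induction w with
  | nil => simp at h
  | cons g t ih =>
      rcases gen_cases g with ⟨γ, rfl⟩ | hg
      · exact ⟨γ, by simp⟩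
      · rw [wordRank_cons, hg, List.length_cons] at h
        obtain ⟨γ, hγ⟩ := ih (by omega)
        exact ⟨γ, by simp [hγ]⟩

lemma repGradCore : ∀ (t : List Gen), (∀ g ∈ t, Gen.rk g = 1) → ∀ (γ : Fin 4)
    (H : (Fin 4 → ℝ) → ℝ), Sm H →
    ∃ T : List (ℝ × List Gen × Fin 4),
      (∀ x, applyWord (Gen.pd γ :: t) H x
          = (T.map (fun s => s.1 * applyWord s.2.1 (pd s.2.2 H) x)).sum) ∧
      (∀ s ∈ T, |s.1| ≤ 1 ∧ s.2.1.length ≤ t.length ∧ wordRank s.2.1 ≤ wordRank t) ∧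
      T.length ≤ 3 ^ t.length := by
  intro t
  induction t with
  | nil =>
      intro _ γ H hH
      refine ⟨[(1, [], γ)], fun x => by simp [applyWord, Gen.apply], by simp [wordRank], by simp⟩
  | cons g t ih =>
      intro hrk γ H hH
      have hrkt : ∀ g' ∈ t, Gen.rk g' = 1 := fun g' hg' => hrk g' (by simp [hg'])
      have hrkg : Gen.rk g = 1 := hrk g (by simp)
      choose F hF1 hF2 hF3 using ih hrkt
      refine ⟨((F γ H hH).map (fun s => (s.1, g :: s.2.1, s.2.2)))
          ++ (commC g γ).flatMap (fun cd => (F cd.2 H hH).map (fun s => (-cd.1 * s.1, s.2))),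
        ?_, ?_, ?_⟩
      · intro x
        have hwt : Sm (applyWord t H) := hH.word t
        have hc := genApply_pd g hwt γ x
        have lhs_eq : applyWord (Gen.pd γ :: g :: t) H x
            = Gen.apply g (pd γ (applyWord t H)) x
              - ((commC g γ).map (fun cd => cd.1 * pd cd.2 (applyWord t H) x)).sum := by
          have : applyWord (Gen.pd γ :: g :: t) H x
              = pd γ (Gen.apply g (applyWord t H)) x := rfl
          rw [this]; linarith [hc]
        have e2 : pd γ (applyWord t H)
            = fun y => ((F γ H hH).map (fun s => s.1 * applyWord s.2.1 (pd s.2.2 H) y)).sum := by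
          funext y; exact hF1 γ H hH y
        have e3 : Gen.apply g (pd γ (applyWord t H)) x
            = ((F γ H hH).map (fun s => s.1 * applyWord (g :: s.2.1) (pd s.2.2 H) x)).sum := by
          have hsmS : ∀ s : ℝ × List Gen × Fin 4,
              Sm (fun y => s.1 * applyWord s.2.1 (pd s.2.2 H) y) :=
            fun s => ContDiff.mul contDiff_const ((hH.pd s.2.2).word s.2.1)
          rw [e2, genApply_list_sum g (F γ H hH)
            (fun s => fun y => s.1 * applyWord s.2.1 (pd s.2.2 H) y) (fun s _ => hsmS s) x]
          refine congrArg List.sum (List.map_congr_left (fun s _ => ?_))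
          rw [genApply_const_mul g ((hH.pd s.2.2).word s.2.1) s.1]
          rfl
        have e4 : ∀ cd : ℝ × Fin 4, pd cd.2 (applyWord t H) x
            = ((F cd.2 H hH).map (fun s => s.1 * applyWord s.2.1 (pd s.2.2 H) x)).sum :=
          fun cd => hF1 cd.2 H hH x
        rw [lhs_eq, e3]
        simp only [List.map_append, List.sum_append]
        rw [sum_flatMap_list]
        have ecd : ((commC g γ).map (fun cd =>
            (((F cd.2 H hH).map (fun s => (-cd.1 * s.1, s.2))).map
              (fun s => s.1 * applyWord s.2.1 (pd s.2.2 H) x)).sum)).sum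
            = ((commC g γ).map (fun cd =>
              -(cd.1 * pd cd.2 (applyWord t H) x))).sum := by
          refine congrArg List.sum (List.map_congr_left (fun cd _ => ?_))
          rw [List.map_map]
          have : ((F cd.2 H hH).map ((fun s => s.1 * applyWord s.2.1 (pd s.2.2 H) x)
              ∘ (fun s : ℝ × List Gen × Fin 4 => (-cd.1 * s.1, s.2)))).sum
              = -cd.1 * ((F cd.2 H hH).map
                  (fun s => s.1 * applyWord s.2.1 (pd s.2.2 H) x)).sum := by
            rw [show ((fun s : ℝ × List Gen × Fin 4 => s.1 * applyWord s.2.1 (pd s.2.2 H) x)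
                ∘ (fun s : ℝ × List Gen × Fin 4 => (-cd.1 * s.1, s.2)))
                = fun s => -cd.1 * (s.1 * applyWord s.2.1 (pd s.2.2 H) x)
                from funext fun s => by simp; ring]
            exact list_mul_sum _ _ _
          rw [this, e4 cd]
          ring
        rw [ecd]
        have : ((commC g γ).map (fun cd => -(cd.1 * pd cd.2 (applyWord t H) x))).sum
            = -((commC g γ).map (fun cd => cd.1 * pd cd.2 (applyWord t H) x)).sum := by
          rw [show (fun cd : ℝ × Fin 4 => -(cd.1 * pd cd.2 (applyWord t H) x))
              = fun cd => (-1 : ℝ) * (cd.1 * pd cd.2 (applyWord t H) x)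
              from funext fun cd => by ring, list_mul_sum]
          ring
        rw [this, List.map_map]
        have emap : ((F γ H hH).map ((fun s => s.1 * applyWord s.2.1 (pd s.2.2 H) x)
            ∘ (fun s : ℝ × List Gen × Fin 4 => (s.1, g :: s.2.1, s.2.2)))).sum
            = ((F γ H hH).map (fun s => s.1 * applyWord (g :: s.2.1) (pd s.2.2 H) x)).sum := by
          refine congrArg List.sum (List.map_congr_left (fun s _ => ?_))
          simp
        rw [emap]
        ring
      · intro s hs
        rcases List.mem_append.1 hs with h | h
        · rcases List.mem_map.1 h with ⟨q, hq, rfl⟩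
          obtain ⟨hc, hl, hr⟩ := hF2 γ H hH q hq
          refine ⟨hc, ?_, ?_⟩
          · show (g :: q.2.1).length ≤ (g :: t).length
            simp only [List.length_cons]; omega
          · show wordRank (g :: q.2.1) ≤ wordRank (g :: t)
            rw [wordRank_cons, wordRank_cons]; omega
        · rcases List.mem_flatMap.1 h with ⟨cd, hcd, hmem⟩
          rcases List.mem_map.1 hmem with ⟨q, hq, rfl⟩
          obtain ⟨hc, hl, hr⟩ := hF2 cd.2 H hH q hq
          have hcoef : |cd.1| ≤ 1 := commC_coeff g γ cd hcd
          refine ⟨?_, ?_, ?_⟩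
          · show |(-cd.1 * q.1)| ≤ 1
            rw [abs_mul, abs_neg]
            exact mul_le_one₀ hcoef (abs_nonneg _) hc
          · show q.2.1.length ≤ (g :: t).length
            simp only [List.length_cons]; omega
          · show wordRank q.2.1 ≤ wordRank (g :: t)
            rw [wordRank_cons]; omega
      · simp only [List.length_append, List.length_map, List.length_flatMap,
          Function.comp_def, List.map_map]
        have hb : ∀ cd ∈ commC g γ, (F cd.2 H hH).length ≤ 3 ^ t.length :=
          fun cd _ => hF3 cd.2 H hH
        have hsum := list_sum_le_length_mul (commC g γ)
          (fun cd => (F cd.2 H hH).length) (3 ^ t.length) hb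
        have hsum' := hsum.trans (Nat.mul_le_mul_right _ (commC_len g γ))
        have hF := hF3 γ H hH
        rw [List.length_cons, pow_succ]
        omega

lemma repGrad : ∀ (n : ℕ) (v : List Gen), v.length ≤ n → (∃ γ, Gen.pd γ ∈ v) →
    ∀ (H : (Fin 4 → ℝ) → ℝ), Sm H →
    ∃ T : List (ℝ × List Gen × Fin 4),
      (∀ x, applyWord v H x = (T.map (fun s => s.1 * applyWord s.2.1 (pd s.2.2 H) x)).sum) ∧
      (∀ s ∈ T, |s.1| ≤ 1 ∧ s.2.1.length + 1 ≤ v.length ∧ wordRank s.2.1 ≤ wordRank v) ∧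
      T.length ≤ 3 ^ v.length := by
  intro n
  induction n with
  | zero =>
      intro v hlen hpd H hH
      obtain ⟨γ, hγ⟩ := hpd
      have : v = [] := List.length_eq_zero_iff.1 (Nat.le_zero.1 hlen)
      subst this; simp at hγ
  | succ n ih =>
      intro v hlen hpd H hH
      match v with
      | [] => obtain ⟨γ, hγ⟩ := hpd; simp at hγ
      | a :: t =>
        by_cases hp : ∃ γ, Gen.pd γ ∈ t
        · obtain ⟨T, hT1, hT2, hT3⟩ := ih t (by simp only [List.length_cons] at hlen; omega) hp H hH
          refine ⟨T.map (fun s => (s.1, a :: s.2.1, s.2.2)), ?_, ?_, ?_⟩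
          · intro x
            have e : applyWord t H
                = fun y => (T.map (fun s => s.1 * applyWord s.2.1 (pd s.2.2 H) y)).sum := by
              funext y; exact hT1 y
            have : applyWord (a :: t) H x = Gen.apply a (applyWord t H) x := rfl
            have hsmS : ∀ s : ℝ × List Gen × Fin 4,
                Sm (fun y => s.1 * applyWord s.2.1 (pd s.2.2 H) y) :=
              fun s => ContDiff.mul contDiff_const ((hH.pd s.2.2).word s.2.1)
            rw [this, e, genApply_list_sum a T
              (fun s => fun y => s.1 * applyWord s.2.1 (pd s.2.2 H) y)
              (fun s _ => hsmS s) x, List.map_map]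
            refine congrArg List.sum (List.map_congr_left (fun s _ => ?_))
            rw [genApply_const_mul a ((hH.pd s.2.2).word s.2.1) s.1]
            rfl
          · intro s hs
            rcases List.mem_map.1 hs with ⟨q, hq, rfl⟩
            obtain ⟨hc, hl, hr⟩ := hT2 q hq
            refine ⟨hc, ?_, ?_⟩
            · show (a :: q.2.1).length + 1 ≤ (a :: t).length
              simp only [List.length_cons]; omega
            · show wordRank (a :: q.2.1) ≤ wordRank (a :: t)
              rw [wordRank_cons, wordRank_cons]
              have := wordRank_le_length q.2.1
              omega
          · rw [List.length_map, List.length_cons]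
            calc T.length ≤ 3 ^ t.length := hT3
              _ ≤ 3 ^ (t.length + 1) := Nat.pow_le_pow_right (by norm_num) (by omega)
        · obtain ⟨γ, hγ⟩ := hpd
          rcases List.mem_cons.1 hγ with rfl | hmem
          · have hrkt : ∀ g ∈ t, Gen.rk g = 1 := by
              intro g hg
              rcases gen_cases g with ⟨δ, rfl⟩ | h
              · exact absurd ⟨δ, hg⟩ hp
              · exact h
            obtain ⟨T, hT1, hT2, hT3⟩ := repGradCore t hrkt γ H hH
            refine ⟨T, hT1, ?_, ?_⟩
            · intro s hs
              obtain ⟨hc, hl, hr⟩ := hT2 s hs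
              refine ⟨hc, ?_, ?_⟩
              · simp only [List.length_cons]; omega
              · rw [wordRank_cons]; omega
            · calc T.length ≤ 3 ^ t.length := hT3
                _ ≤ 3 ^ (Gen.pd γ :: t).length :=
                  Nat.pow_le_pow_right (by norm_num) (by simp)
          · exact absurd ⟨γ, hmem⟩ hp

lemma foldr_max_nonneg (L : List ℝ) : 0 ≤ L.foldr max 0 := by
  induction L with
  | nil => simp
  | cons a L ih => simp only [List.foldr_cons]; exact le_max_of_le_right ih

lemma le_foldr_max {a : ℝ} {L : List ℝ} (h : a ∈ L) : a ≤ L.foldr max 0 := by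
  induction L with
  | nil => simp at h
  | cons b L ih =>
      rcases List.mem_cons.1 h with rfl | h'
      · exact le_max_left _ _
      · exact le_max_of_le_right (ih h')

lemma gen_mem_gens (g : Gen) : g ∈ gens := by
  cases g <;> simp [gens]

lemma mem_wordsUpTo : ∀ (n : ℕ) (v : List Gen), v.length ≤ n → v ∈ wordsUpTo n := by
  intro n
  induction n with
  | zero =>
      intro v hv
      have : v = [] := List.length_eq_zero_iff.1 (Nat.le_zero.1 hv)
      subst this; simp [wordsUpTo]
  | succ n ih =>
      intro v hv
      match v with
      | [] => simp [wordsUpTo]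
      | a :: t =>
        have ht : t ∈ wordsUpTo n := ih t (by simp only [List.length_cons] at hv; omega)
        simp only [wordsUpTo, List.mem_append, List.mem_flatMap]
        right
        exact ⟨t, ht, List.mem_map.2 ⟨a, gen_mem_gens a, rfl⟩⟩

lemma abs_le_pkNorm {v : List Gen} {q l : ℕ} {f} {x} (h1 : v.length ≤ q)
    (h2 : wordRank v ≤ l) : |applyWord v f x| ≤ pkNorm q l f x := by
  apply le_foldr_max
  apply List.mem_map.2
  refine ⟨v, List.mem_filter.2 ⟨mem_wordsUpTo q v h1, by simpa using h2⟩, rfl⟩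

lemma pkNorm_nonneg (q l : ℕ) (f) (x) : 0 ≤ pkNorm q l f x := foldr_max_nonneg _
lemma hessNorm_nonneg (q l : ℕ) (f) (x) : 0 ≤ hessNorm q l f x := foldr_max_nonneg _
lemma gradNorm_nonneg (q l : ℕ) (f) (x) : 0 ≤ gradNorm q l f x := foldr_max_nonneg _
lemma loNorm_nonneg (q : ℕ) (f) (x) : 0 ≤ loNorm q f x := foldr_max_nonneg _

lemma abs_le_hessNorm {w : List Gen} {q l : ℕ} {u} {x} (α β : Fin 4)
    (h1 : w.length ≤ q) (h2 : wordRank w ≤ l) :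
    |applyWord w (pd α (pd β u)) x| ≤ hessNorm q l u x := by
  refine le_trans (abs_le_pkNorm h1 h2) (le_foldr_max ?_)
  apply List.mem_flatMap.2
  exact ⟨α, List.mem_finRange α, List.mem_map.2 ⟨β, List.mem_finRange β, rfl⟩⟩

lemma abs_le_gradNorm {w : List Gen} {q l : ℕ} {H} {x} (γ : Fin 4)
    (h1 : w.length ≤ q) (h2 : wordRank w ≤ l) :
    |applyWord w (pd γ H) x| ≤ gradNorm q l H x := by
  refine le_trans (abs_le_pkNorm h1 h2) (le_foldr_max ?_)
  exact List.mem_map.2 ⟨γ, List.mem_finRange γ, rfl⟩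

lemma abs_le_loNorm {w : List Gen} {q : ℕ} {H} {x} (g : Gen) (hg : Gen.rk g = 1)
    (h1 : w.length ≤ q) : |applyWord w (Gen.apply g H) x| ≤ loNorm q H x := by
  have h2 : wordRank w ≤ q := le_trans (wordRank_le_length w) h1
  cases g with
  | pd γ => simp [Gen.rk] at hg
  | boost a =>
      refine le_trans (abs_le_pkNorm h1 h2) (le_foldr_max ?_)
      apply List.mem_append.2
      exact Or.inl (List.mem_map.2 ⟨a, List.mem_finRange a, rfl⟩)
  | rot a b =>
      refine le_trans (abs_le_pkNorm h1 h2) (le_foldr_max ?_)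
      apply List.mem_append.2
      refine Or.inr (List.mem_flatMap.2 ⟨a, List.mem_finRange a,
        List.mem_map.2 ⟨b, List.mem_finRange b, rfl⟩⟩)

lemma list_abs_sum_le {ι} (L : List ι) (f : ι → ℝ) :
    |(L.map f).sum| ≤ (L.map (fun a => |f a|)).sum := by
  induction L with
  | nil => simp
  | cons a L ih =>
      simp only [List.map_cons, List.sum_cons]
      exact le_trans (abs_add_le _ _) (by linarith)

lemma list_sum_le_length_mul_real {ι} (L : List ι) (f : ι → ℝ) (B : ℝ)
    (h : ∀ a ∈ L, f a ≤ B) (hB : 0 ≤ B) : (L.map f).sum ≤ L.length * B := by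
  induction L with
  | nil => simp
  | cons a L ih =>
      have h1 := h a (by simp)
      have h2 := ih (fun b hb => h b (by simp [hb]))
      simp only [List.map_cons, List.sum_cons, List.length_cons]
      push_cast
      linarith

lemma eq_append_singleton_of_ne_nil {w : List Gen} (h : w ≠ []) :
    ∃ w' g, w = w' ++ [g] := by
  rcases List.eq_nil_or_concat w with rfl | ⟨L, b, rfl⟩
  · exact absurd rfl h
  · exact ⟨L, b, by simp⟩

theorem stmt14 :
    ∀ p k : ℕ, k ≤ p → ∃ C : ℝ, 0 < C ∧
      ∀ w : List Gen, w.length = p → wordRank w = k →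
        ∀ H u : (Fin 4 → ℝ) → ℝ, ContDiff ℝ (⊤ : ℕ∞) H → ContDiff ℝ (⊤ : ℕ∞) u →
          ∀ (α β : Fin 4) (x : Fin 4 → ℝ),
            |applyWord w (fun q => H q * pd α (pd β u) q) x
                - H x * pd α (pd β (applyWord w u)) x|
              ≤ C * ((if 1 ≤ k then |H x| * hessNorm (p - 1) (k - 1) u x else 0)
                  + (∑ k₁ ∈ Finset.Icc 1 k,
                      loNorm (k₁ - 1) H x * hessNorm (p - k₁) (k - k₁) u x)
                  + ∑ p₁ ∈ Finset.Icc 1 p, ∑ k₁ ∈ Finset.range (k + 1),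
                      gradNorm (p₁ - 1) k₁ H x * hessNorm (p - p₁) (k - k₁) u x) := by
  intro p k hkp
  refine ⟨(6:ℝ)^p + 5^p, by positivity, ?_⟩
  intro w hw hkw H u hH hu α β x
  have hH' : Sm H := hH.of_le (by simp)
  have hu' : Sm u := hu.of_le (by simp)
  set P1 : ℝ := if 1 ≤ k then |H x| * hessNorm (p - 1) (k - 1) u x else 0 with hP1
  set P2 : ℝ := ∑ k₁ ∈ Finset.Icc 1 k, loNorm (k₁ - 1) H x * hessNorm (p - k₁) (k - k₁) u x
    with hP2
  set P3 : ℝ := ∑ p₁ ∈ Finset.Icc 1 p, ∑ k₁ ∈ Finset.range (k + 1),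
    gradNorm (p₁ - 1) k₁ H x * hessNorm (p - p₁) (k - k₁) u x with hP3
  have hP1nn : 0 ≤ P1 := by
    rw [hP1]; split_ifs
    · exact mul_nonneg (abs_nonneg _) (hessNorm_nonneg _ _ _ _)
    · exact le_refl 0
  have hP2nn : 0 ≤ P2 :=
    Finset.sum_nonneg fun i _ => mul_nonneg (loNorm_nonneg _ _ _) (hessNorm_nonneg _ _ _ _)
  have hP3nn : 0 ≤ P3 :=
    Finset.sum_nonneg fun i _ => Finset.sum_nonneg fun j _ =>
      mul_nonneg (gradNorm_nonneg _ _ _ _) (hessNorm_nonneg _ _ _ _)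
  obtain ⟨T, hT1, hT2, hT3⟩ := commLemma w hu' α β
  have hsplit := splitLemma w hH' ((hu'.pd β).pd α) x
  have key : applyWord w (fun q => H q * pd α (pd β u) q) x
      - H x * pd α (pd β (applyWord w u)) x
      = ((gsplits w).map
          (fun q => applyWord q.1 H x * applyWord q.2 (pd α (pd β u)) x)).sum
        - H x * ((T.map (tval u x)).sum) := by
    rw [hsplit, hT1 x]; ring
  rw [key]
  -- Part A : the pure commutator terms
  have hTbound : |H x * (T.map (tval u x)).sum| ≤ 5^p * P1 := by
    by_cases hTnil : T = []
    · subst hTnil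
      simp only [List.map_nil, List.sum_nil, mul_zero, abs_zero]
      exact mul_nonneg (by positivity) hP1nn
    · obtain ⟨t₀, ht₀⟩ := List.exists_mem_of_ne_nil T hTnil
      have hk1 : 1 ≤ k := by
        obtain ⟨_, _, hr⟩ := hT2 t₀ ht₀
        rw [hkw] at hr; omega
      have hP1eq : P1 = |H x| * hessNorm (p - 1) (k - 1) u x := by rw [hP1, if_pos hk1]
      have hone : ∀ t ∈ T, |tval u x t| ≤ hessNorm (p - 1) (k - 1) u x := by
        intro t ht
        obtain ⟨hc, hl, hr⟩ := hT2 t ht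
        rw [hw] at hl; rw [hkw] at hr
        have hb := abs_le_hessNorm (w := t.2.1) (u := u) (x := x) (q := p - 1) (l := k - 1)
          t.2.2.1 t.2.2.2 (by omega) (by omega)
        calc |tval u x t| = |t.1| * |applyWord t.2.1 (pd t.2.2.1 (pd t.2.2.2 u)) x| := by
              rw [tval, abs_mul]
          _ ≤ 1 * hessNorm (p - 1) (k - 1) u x :=
              mul_le_mul hc hb (abs_nonneg _) zero_le_one
          _ = hessNorm (p - 1) (k - 1) u x := one_mul _
      have hlenT : (T.length : ℝ) ≤ 5 ^ p := by
        have : T.length ≤ 5 ^ p := by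
          have := hT3; rw [hw] at this; omega
        exact_mod_cast this
      have hsum : |(T.map (tval u x)).sum| ≤ (T.length : ℝ) * hessNorm (p-1) (k-1) u x :=
        le_trans (list_abs_sum_le T (tval u x))
          (list_sum_le_length_mul_real T _ _ hone (hessNorm_nonneg _ _ _ _))
      calc |H x * (T.map (tval u x)).sum| = |H x| * |(T.map (tval u x)).sum| := abs_mul _ _
        _ ≤ |H x| * ((T.length : ℝ) * hessNorm (p-1) (k-1) u x) :=
            mul_le_mul_of_nonneg_left hsum (abs_nonneg _)
        _ ≤ 5^p * P1 := by
            rw [hP1eq]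
            have h0 := abs_nonneg (H x)
            have h1 := hessNorm_nonneg (p-1) (k-1) u x
            nlinarith [mul_nonneg h0 h1]
  -- Part B : the Leibniz split terms
  have hSbound : ∀ q ∈ gsplits w,
      |applyWord q.1 H x * applyWord q.2 (pd α (pd β u)) x| ≤ 3^p * (P2 + P3) := by
    intro q hq
    obtain ⟨hne, hlen, hrank⟩ := gsplits_spec w q hq
    rw [hw] at hlen; rw [hkw] at hrank
    have h3p1 : (1:ℝ) ≤ 3^p := one_le_pow₀ (by norm_num)
    by_cases hcase : wordRank q.1 = q.1.length
    · -- all boosts/rotations : loNorm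
      obtain ⟨w', g, hqe⟩ := eq_append_singleton_of_ne_nil hne
      have hlen' : q.1.length = w'.length + 1 := by rw [hqe]; simp
      have hrk' : wordRank q.1 = wordRank w' + Gen.rk g := by
        rw [hqe, wordRank_append]; simp [wordRank]
      have hgrk : Gen.rk g = 1 := by
        have h1 := wordRank_le_length w'
        have h2 := gen_rk_le_one g
        omega
      have hk₁1 : 1 ≤ q.1.length := by omega
      have hk₁k : q.1.length ≤ k := by omega
      have hH1 : |applyWord q.1 H x| ≤ loNorm (q.1.length - 1) H x := by
        rw [hqe, applyWord_append]
        have : applyWord [g] H = Gen.apply g H := rfl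
        rw [this]
        exact abs_le_loNorm g hgrk (by simp only [List.length_append, List.length_singleton] at hlen' ⊢; omega)
      have hu1 : |applyWord q.2 (pd α (pd β u)) x|
          ≤ hessNorm (p - q.1.length) (k - q.1.length) u x :=
        abs_le_hessNorm α β (by omega) (by omega)
      have hterm : |applyWord q.1 H x * applyWord q.2 (pd α (pd β u)) x|
          ≤ loNorm (q.1.length - 1) H x * hessNorm (p - q.1.length) (k - q.1.length) u x := by
        rw [abs_mul]
        exact mul_le_mul hH1 hu1 (abs_nonneg _) (loNorm_nonneg _ _ _)
      have hP2b : loNorm (q.1.length - 1) H x * hessNorm (p - q.1.length) (k - q.1.length) u x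
          ≤ P2 := by
        rw [hP2]
        exact Finset.single_le_sum
          (f := fun k₁ => loNorm (k₁ - 1) H x * hessNorm (p - k₁) (k - k₁) u x)
          (fun i _ => mul_nonneg (loNorm_nonneg _ _ _) (hessNorm_nonneg _ _ _ _))
          (Finset.mem_Icc.2 ⟨hk₁1, hk₁k⟩)
      nlinarith [hterm, hP2b, mul_nonneg (sub_nonneg.2 h3p1) hP2nn,
        mul_nonneg (le_trans zero_le_one h3p1) hP3nn]
    · -- contains a partial derivative : gradNorm
      have hlt : wordRank q.1 < q.1.length := lt_of_le_of_ne (wordRank_le_length q.1) hcase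
      obtain ⟨T', hG1, hG2, hG3⟩ := repGrad p q.1 (by omega)
        (exists_pd_of_rank_lt q.1 hlt) H hH'
      have hp₁1 : 1 ≤ q.1.length := List.length_pos_iff.2 hne
      have hp₁p : q.1.length ≤ p := by omega
      have hk₁k : wordRank q.1 ≤ k := by omega
      have hHbd : |applyWord q.1 H x| ≤ 3^p * gradNorm (q.1.length - 1) (wordRank q.1) H x := by
        rw [hG1 x]
        refine le_trans (list_abs_sum_le T' _) ?_
        have hone : ∀ s ∈ T', |s.1 * applyWord s.2.1 (pd s.2.2 H) x|
            ≤ gradNorm (q.1.length - 1) (wordRank q.1) H x := by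
          intro s hs
          obtain ⟨hc, hl, hr⟩ := hG2 s hs
          have hb := abs_le_gradNorm (w := s.2.1) (H := H) (x := x)
            (q := q.1.length - 1) (l := wordRank q.1) s.2.2 (by omega) hr
          calc |s.1 * applyWord s.2.1 (pd s.2.2 H) x|
              = |s.1| * |applyWord s.2.1 (pd s.2.2 H) x| := abs_mul _ _
            _ ≤ 1 * gradNorm (q.1.length - 1) (wordRank q.1) H x :=
                mul_le_mul hc hb (abs_nonneg _) zero_le_one
            _ = _ := one_mul _
        have hlenT : (T'.length : ℝ) ≤ 3 ^ p := by
          have h1 : T'.length ≤ 3 ^ q.1.length := hG3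
          have h2 : (3:ℕ) ^ q.1.length ≤ 3 ^ p := Nat.pow_le_pow_right (by norm_num) hp₁p
          exact_mod_cast le_trans h1 h2
        refine le_trans (list_sum_le_length_mul_real T' _ _ hone (gradNorm_nonneg _ _ _ _)) ?_
        exact mul_le_mul_of_nonneg_right hlenT (gradNorm_nonneg _ _ _ _)
      have hu1 : |applyWord q.2 (pd α (pd β u)) x|
          ≤ hessNorm (p - q.1.length) (k - wordRank q.1) u x :=
        abs_le_hessNorm α β (by omega) (by omega)
      have hP3b : gradNorm (q.1.length - 1) (wordRank q.1) H x
          * hessNorm (p - q.1.length) (k - wordRank q.1) u x ≤ P3 := by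
        rw [hP3]
        have hinner : gradNorm (q.1.length - 1) (wordRank q.1) H x
            * hessNorm (p - q.1.length) (k - wordRank q.1) u x
            ≤ ∑ k₁ ∈ Finset.range (k + 1),
                gradNorm (q.1.length - 1) k₁ H x * hessNorm (p - q.1.length) (k - k₁) u x :=
          Finset.single_le_sum
            (f := fun k₁ => gradNorm (q.1.length - 1) k₁ H x
              * hessNorm (p - q.1.length) (k - k₁) u x)
            (fun i _ => mul_nonneg (gradNorm_nonneg _ _ _ _) (hessNorm_nonneg _ _ _ _))
            (Finset.mem_range.2 (by omega))
        refine le_trans hinner ?_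
        exact Finset.single_le_sum
          (f := fun p₁ => ∑ k₁ ∈ Finset.range (k + 1),
            gradNorm (p₁ - 1) k₁ H x * hessNorm (p - p₁) (k - k₁) u x)
          (fun i _ => Finset.sum_nonneg fun j _ =>
            mul_nonneg (gradNorm_nonneg _ _ _ _) (hessNorm_nonneg _ _ _ _))
          (Finset.mem_Icc.2 ⟨hp₁1, hp₁p⟩)
      have hprod : |applyWord q.1 H x * applyWord q.2 (pd α (pd β u)) x|
          ≤ (3^p * gradNorm (q.1.length - 1) (wordRank q.1) H x)
            * hessNorm (p - q.1.length) (k - wordRank q.1) u x := by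
        rw [abs_mul]
        exact mul_le_mul hHbd hu1 (abs_nonneg _)
          (mul_nonneg (by positivity) (gradNorm_nonneg _ _ _ _))
      have hgnn := gradNorm_nonneg (q.1.length - 1) (wordRank q.1) H x
      have hhnn := hessNorm_nonneg (p - q.1.length) (k - wordRank q.1) u x
      have h3pnn : (0:ℝ) ≤ 3^p := by positivity
      have heq : (3^p * gradNorm (q.1.length - 1) (wordRank q.1) H x)
          * hessNorm (p - q.1.length) (k - wordRank q.1) u x
          = 3^p * (gradNorm (q.1.length - 1) (wordRank q.1) H x
            * hessNorm (p - q.1.length) (k - wordRank q.1) u x) := by ring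
      have hb2 : 3^p * (gradNorm (q.1.length - 1) (wordRank q.1) H x
          * hessNorm (p - q.1.length) (k - wordRank q.1) u x) ≤ 3^p * P3 :=
        mul_le_mul_of_nonneg_left hP3b h3pnn
      rw [heq] at hprod
      have hfin : 3^p * P3 ≤ 3^p * (P2 + P3) := by
        have := mul_nonneg h3pnn hP2nn
        nlinarith
      linarith [hprod, hb2, hfin]
  -- combine
  have habs : |((gsplits w).map
      (fun q => applyWord q.1 H x * applyWord q.2 (pd α (pd β u)) x)).sum
      - H x * (T.map (tval u x)).sum|
      ≤ ((gsplits w).length : ℝ) * (3^p * (P2 + P3)) + 5^p * P1 := by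
    refine le_trans (abs_sub _ _) ?_
    have h1 : |((gsplits w).map
        (fun q => applyWord q.1 H x * applyWord q.2 (pd α (pd β u)) x)).sum|
        ≤ ((gsplits w).length : ℝ) * (3^p * (P2 + P3)) := by
      refine le_trans (list_abs_sum_le _ _) ?_
      exact list_sum_le_length_mul_real _ _ _ hSbound
        (mul_nonneg (by positivity) (add_nonneg hP2nn hP3nn))
    linarith [hTbound, h1]
  refine le_trans habs ?_
  have hglen : ((gsplits w).length : ℝ) ≤ 2 ^ p := by
    have := gsplits_len w; rw [hw] at this
    have h2 : (gsplits w).length ≤ 2 ^ p := by omega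
    exact_mod_cast h2
  have h23 : ((2:ℝ)^p) * (3^p) = 6^p := by
    rw [← mul_pow]; norm_num
  have h3nn : (0:ℝ) ≤ 3^p := by positivity
  have h2nn : (0:ℝ) ≤ 2^p := by positivity
  have h5nn : (0:ℝ) ≤ 5^p := by positivity
  have hsum23 : ((gsplits w).length : ℝ) * (3^p * (P2 + P3)) ≤ 6^p * (P2 + P3) := by
    have h1 : ((gsplits w).length : ℝ) * (3^p * (P2 + P3)) ≤ 2^p * (3^p * (P2 + P3)) :=
      mul_le_mul_of_nonneg_right hglen
        (mul_nonneg h3nn (add_nonneg hP2nn hP3nn))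
    have h2 : (2:ℝ)^p * (3^p * (P2 + P3)) = 6^p * (P2 + P3) := by
      rw [← mul_assoc, h23]
    linarith [h1]
  have h6nn : (0:ℝ) ≤ 6^p := by positivity
  have hexp : ((6:ℝ)^p + 5^p) * (P1 + P2 + P3)
      = 6^p * (P2 + P3) + 5^p * P1 + (6^p * P1 + 5^p * P2 + 5^p * P3) := by ring
  rw [hexp]
  linarith [mul_nonneg h6nn hP1nn, mul_nonneg h5nn hP2nn, mul_nonneg h5nn hP3nn, hsum23]
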